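/- Suppose that φ(q_i) < M_i − 1 for all sufficiently large i. Then the set E = ⋂_{i=1}^∞ E_i is uncountable. -/

import Mathlib

/-!
Choose `n` such that `φ (q i) < M i - 1` and `3 * q i ≤ q (i + 1)` for `i ≥ n`, and
`2 / q n ≤ r i` for `i < n`. For `S ⊆ ℕ` put `x_S = ∑_{m ∈ S} 1 / q (n + m)`. The terms with
`n + m ≤ i` add up to a multiple of `1 / q i`, i.e. a point of `G i`, and the remaining ones to at
most `2 / q (max n (i + 1))`, which is `≤ r i`: for `i ≥ n` because
`2 / q (i + 1) ≤ q i ^ (1 - M i) ≤ q i ^ (-φ (q i))`. So `x_S ∈ E`. As the denominators at least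
triple, each term exceeds the sum of all later ones, so `S ↦ x_S` is injective and `E` contains a
copy of `Set ℕ`.
-/

open Filter Set Metric Pointwise
open scoped Topology

section SubsetSum

variable {w : ℕ → ℝ}

noncomputable def subsetSum (w : ℕ → ℝ) (s : Set ℕ) : ℝ := ∑' m, s.indicator w m

lemma le_mul_half_pow_of_two_mul_succ_le (hw : ∀ m, 2 * w (m + 1) ≤ w m) (t k : ℕ) :
    w (k + t) ≤ w t * (1 / 2) ^ k := by
  induction k with
  | zero => simp
  | succ k ih =>
    have := hw (k + t)
    rw [show k + 1 + t = k + t + 1 by omega, pow_succ]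
    linarith

lemma indicator_nat_add_le (hw0 : ∀ m, 0 ≤ w m) (hw : ∀ m, 2 * w (m + 1) ≤ w m)
    (s : Set ℕ) (t k : ℕ) : s.indicator w (k + t) ≤ w t * (1 / 2) ^ k :=
  (indicator_le_self' (fun m _ => hw0 m) _).trans (le_mul_half_pow_of_two_mul_succ_le hw t k)

lemma summable_indicator_nat_add (hw0 : ∀ m, 0 ≤ w m) (hw : ∀ m, 2 * w (m + 1) ≤ w m)
    (s : Set ℕ) (t : ℕ) : Summable fun k => s.indicator w (k + t) :=
  .of_nonneg_of_le (fun k => indicator_nonneg (fun m _ => hw0 m) (k + t))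
    (indicator_nat_add_le hw0 hw s t) (summable_geometric_two.mul_left (w t))

lemma tsum_indicator_nat_add_le (hw0 : ∀ m, 0 ≤ w m) (hw : ∀ m, 2 * w (m + 1) ≤ w m)
    (s : Set ℕ) (t : ℕ) : ∑' k, s.indicator w (k + t) ≤ 2 * w t :=
  calc ∑' k, s.indicator w (k + t) ≤ ∑' k, w t * (1 / 2) ^ k :=
        Summable.tsum_le_tsum (indicator_nat_add_le hw0 hw s t)
          (summable_indicator_nat_add hw0 hw s t) (summable_geometric_two.mul_left (w t))
    _ = 2 * w t := by rw [tsum_mul_left, tsum_geometric_two, mul_comm]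

lemma subsetSum_eq_sum_range_add_tsum (hw0 : ∀ m, 0 ≤ w m) (hw : ∀ m, 2 * w (m + 1) ≤ w m)
    (s : Set ℕ) (t : ℕ) :
    subsetSum w s = ∑ m ∈ Finset.range t, s.indicator w m + ∑' k, s.indicator w (k + t) :=
  (Summable.sum_add_tsum_nat_add t (by simpa using summable_indicator_nat_add hw0 hw s 0)).symm

lemma subsetSum_nonneg (hw0 : ∀ m, 0 ≤ w m) (s : Set ℕ) : 0 ≤ subsetSum w s :=
  tsum_nonneg (indicator_nonneg fun m _ => hw0 m)

lemma subsetSum_le (hw0 : ∀ m, 0 ≤ w m) (hw : ∀ m, 2 * w (m + 1) ≤ w m) (s : Set ℕ) :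
    subsetSum w s ≤ 2 * w 0 := by
  unfold subsetSum
  simpa only [add_zero] using tsum_indicator_nat_add_le hw0 hw s 0

lemma subsetSum_lt_of_agree_below (hw0 : ∀ m, 0 < w m) (hw : ∀ m, 3 * w (m + 1) ≤ w m)
    {s s' : Set ℕ} {m : ℕ} (hagree : ∀ k < m, k ∈ s ↔ k ∈ s') (hs : m ∈ s) (hs' : m ∉ s') :
    subsetSum w s' < subsetSum w s := by
  have hw0' : ∀ m, 0 ≤ w m := fun m => (hw0 m).le
  have hw2 : ∀ m, 2 * w (m + 1) ≤ w m := fun m => by linarith [hw m, hw0 (m + 1)]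
  have hhead : ∑ k ∈ Finset.range m, s'.indicator w k = ∑ k ∈ Finset.range m, s.indicator w k :=
    Finset.sum_congr rfl fun k hk => by
      classical simp only [indicator_apply, hagree k (Finset.mem_range.1 hk)]
  rw [subsetSum_eq_sum_range_add_tsum hw0' hw2 s (m + 1),
    subsetSum_eq_sum_range_add_tsum hw0' hw2 s' (m + 1), Finset.sum_range_succ,
    Finset.sum_range_succ, hhead, indicator_of_mem hs, indicator_of_notMem hs']
  have htail := tsum_indicator_nat_add_le hw0' hw2 s' (m + 1)
  have htail_nonneg : 0 ≤ ∑' k, s.indicator w (k + (m + 1)) :=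
    tsum_nonneg fun k => indicator_nonneg (fun m _ => hw0' m) _
  linarith [hw m, hw0 (m + 1)]

theorem subsetSum_injective (hw0 : ∀ m, 0 < w m) (hw : ∀ m, 3 * w (m + 1) ≤ w m) :
    Function.Injective (subsetSum w) := by
  intro s s' h
  ext m
  induction m using Nat.strong_induction_on with
  | _ m ih =>
    by_cases hs : m ∈ s <;> by_cases hs' : m ∈ s'
    · exact iff_of_true hs hs'
    · exact absurd h (subsetSum_lt_of_agree_below hw0 hw ih hs hs').ne'
    · exact absurd h (subsetSum_lt_of_agree_below hw0 hw (fun k hk => (ih k hk).symm) hs' hs).ne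
    · exact iff_of_false hs hs'

end SubsetSum

theorem not_countable_set_nat : ¬ Countable (Set ℕ) := fun _ =>
  let ⟨f, hf⟩ := exists_surjective_nat (Set ℕ)
  Function.cantor_surjective f hf

def grid (D : ℕ) : Set ℝ := {x | ∃ k : ℤ, 0 ≤ k ∧ k ≤ (D : ℤ) ∧ x = (k : ℝ) / (D : ℝ)}

lemma inv_mem_zmultiples_inv_of_dvd {a b : ℕ} (hb : b ≠ 0) (hab : a ∣ b) :
    (a : ℝ)⁻¹ ∈ AddSubgroup.zmultiples (b : ℝ)⁻¹ := by
  obtain ⟨c, rfl⟩ := hab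
  have ha : (a : ℝ) ≠ 0 := by exact_mod_cast left_ne_zero_of_mul hb
  have hc : (c : ℝ) ≠ 0 := by exact_mod_cast right_ne_zero_of_mul hb
  refine AddSubgroup.mem_zmultiples_iff.2 ⟨c, ?_⟩
  rw [zsmul_eq_mul]
  push_cast
  field_simp

lemma mem_grid_of_mem_zmultiples {D : ℕ} (hD : 0 < D) {y : ℝ}
    (hy : y ∈ AddSubgroup.zmultiples (D : ℝ)⁻¹) (hy0 : 0 ≤ y) (hy1 : y ≤ 1) : y ∈ grid D := by
  obtain ⟨k, rfl⟩ := AddSubgroup.mem_zmultiples_iff.1 hy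
  have hDR : (0 : ℝ) < D := by exact_mod_cast hD
  rw [zsmul_eq_mul, ← div_eq_mul_inv] at hy0 hy1 ⊢
  refine ⟨k, ?_, ?_, rfl⟩
  · have : (0 : ℝ) ≤ k := by simpa using (le_div_iff₀ hDR).1 hy0
    exact_mod_cast this
  · exact_mod_cast (div_le_one hDR).1 hy1

lemma mul_inv_succ_le_inv {Q : ℕ → ℕ} {c : ℕ} (hQ : ∀ m, 0 < Q m)
    (h : ∀ m, c * Q m ≤ Q (m + 1)) (m : ℕ) : (c : ℝ) * (Q (m + 1) : ℝ)⁻¹ ≤ (Q m : ℝ)⁻¹ := by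
  have h0 : (0 : ℝ) < Q m := by exact_mod_cast hQ m
  have h1 : (0 : ℝ) < Q (m + 1) := by exact_mod_cast hQ (m + 1)
  rw [← div_eq_mul_inv, div_le_iff₀ h1, ← div_eq_inv_mul, le_div_iff₀ h0]
  exact_mod_cast h m

section InverseWeights

variable {Q : ℕ → ℕ}

lemma two_mul_inv_succ_le_inv (hQ : ∀ m, 2 ≤ Q m) (hQ2 : ∀ m, 2 * Q m ≤ Q (m + 1)) (m : ℕ) :
    2 * (Q (m + 1) : ℝ)⁻¹ ≤ (Q m : ℝ)⁻¹ := by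
  exact_mod_cast mul_inv_succ_le_inv (fun m => (hQ m).trans_lt' two_pos) hQ2 m

lemma subsetSum_inv_le_one (hQ : ∀ m, 2 ≤ Q m) (hQ2 : ∀ m, 2 * Q m ≤ Q (m + 1)) (s : Set ℕ) :
    subsetSum (fun m => (Q m : ℝ)⁻¹) s ≤ 1 := by
  have hQ0 : (2 : ℝ) ≤ Q 0 := by exact_mod_cast hQ 0
  calc subsetSum (fun m => (Q m : ℝ)⁻¹) s ≤ 2 * (Q 0 : ℝ)⁻¹ :=
        subsetSum_le (fun _ => by positivity) (two_mul_inv_succ_le_inv hQ hQ2) s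
    _ ≤ 1 := by rw [← div_eq_mul_inv, div_le_one (by linarith)]; exact hQ0

lemma infDist_subsetSum_grid_le (hQ : ∀ m, 2 ≤ Q m) (hQ2 : ∀ m, 2 * Q m ≤ Q (m + 1))
    {D t : ℕ} (hD : 0 < D) (hdvd : ∀ m < t, Q m ∣ D) (s : Set ℕ) :
    infDist (subsetSum (fun m => (Q m : ℝ)⁻¹) s) (grid D) ≤ 2 / Q t := by
  set w : ℕ → ℝ := fun m => (Q m : ℝ)⁻¹
  have hw0 : ∀ m, 0 ≤ w m := fun _ => by positivity
  have hw := two_mul_inv_succ_le_inv hQ hQ2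
  set P := ∑ m ∈ Finset.range t, s.indicator w m
  have hsplit := subsetSum_eq_sum_range_add_tsum hw0 hw s t
  have htail_nonneg : 0 ≤ ∑' k, s.indicator w (k + t) :=
    tsum_nonneg fun k => indicator_nonneg (fun m _ => hw0 m) _
  have hP_mem : P ∈ AddSubgroup.zmultiples (D : ℝ)⁻¹ := by
    refine AddSubgroup.sum_mem _ fun m hm => ?_
    by_cases hms : m ∈ s
    · rw [indicator_of_mem hms]
      exact inv_mem_zmultiples_inv_of_dvd hD.ne' (hdvd m (Finset.mem_range.1 hm))
    · rw [indicator_of_notMem hms]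
      exact zero_mem _
  have hP_grid : P ∈ grid D :=
    mem_grid_of_mem_zmultiples hD hP_mem
      (Finset.sum_nonneg fun m _ => indicator_nonneg (fun m _ => hw0 m) m)
      (by linarith [subsetSum_inv_le_one hQ hQ2 s])
  calc infDist (subsetSum w s) (grid D) ≤ dist (subsetSum w s) P := infDist_le_dist_of_mem hP_grid
    _ = ∑' k, s.indicator w (k + t) := by
        rw [Real.dist_eq, hsplit, add_sub_cancel_left, abs_of_nonneg htail_nonneg]
    _ ≤ 2 * w t := tsum_indicator_nat_add_le hw0 hw s t
    _ = 2 / Q t := (div_eq_mul_inv _ _).symm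

lemma subsetSum_inv_injective (hQ : ∀ m, 0 < Q m) (hQ3 : ∀ m, 3 * Q m ≤ Q (m + 1)) :
    Function.Injective (subsetSum fun m => (Q m : ℝ)⁻¹) :=
  subsetSum_injective (fun m => by have := hQ m; positivity)
    (fun m => by exact_mod_cast mul_inv_succ_le_inv hQ hQ3 m)

end InverseWeights

section PowerTower

variable {M q : ℕ → ℕ}

lemma two_le_of_pow_succ (hq0 : 2 ≤ q 0) (hqrec : ∀ i, q (i + 1) = q i ^ M i)
    (hM : ∀ i, 0 < M i) (i : ℕ) : 2 ≤ q i := by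
  induction i with
  | zero => exact hq0
  | succ i ih => exact hqrec i ▸ ih.trans (Nat.le_self_pow (hM i).ne' _)

lemma monotone_of_pow_succ (hqrec : ∀ i, q (i + 1) = q i ^ M i) (hM : ∀ i, 0 < M i) :
    Monotone q :=
  monotone_nat_of_le_succ fun i => hqrec i ▸ Nat.le_self_pow (hM i).ne' _

lemma dvd_of_le_of_pow_succ (hqrec : ∀ i, q (i + 1) = q i ^ M i) (hM : ∀ i, 0 < M i)
    {i j : ℕ} (hij : i ≤ j) : q i ∣ q j := by
  induction j, hij using Nat.le_induction with
  | base => exact dvd_rfl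
  | succ j _ ih => exact hqrec j ▸ ih.trans (dvd_pow_self _ (hM j).ne')

lemma tendsto_atTop_of_pow_succ (hq0 : 2 ≤ q 0) (hqrec : ∀ i, q (i + 1) = q i ^ M i)
    (hM : ∀ i, 0 < M i) (hMtop : Tendsto M atTop atTop) : Tendsto q atTop atTop := by
  refine (tendsto_add_atTop_iff_nat 1).1 (tendsto_atTop_mono (fun i => ?_) hMtop)
  rw [hqrec]
  exact Nat.lt_two_pow_self.le.trans (Nat.pow_le_pow_left (two_le_of_pow_succ hq0 hqrec hM i) _)

lemma eventually_three_mul_le_of_pow_succ (hq0 : 2 ≤ q 0) (hqrec : ∀ i, q (i + 1) = q i ^ M i)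
    (hM : ∀ i, 0 < M i) (hMtop : Tendsto M atTop atTop) :
    ∀ᶠ i in atTop, 3 * q i ≤ q (i + 1) := by
  filter_upwards [hMtop.eventually_ge_atTop 2,
    (tendsto_atTop_of_pow_succ hq0 hqrec hM hMtop).eventually_ge_atTop 3] with i hM2 hq3
  calc 3 * q i ≤ q i ^ 2 := by nlinarith
    _ ≤ q (i + 1) := hqrec i ▸ Nat.pow_le_pow_right (by omega) hM2

lemma two_div_succ_le_rpow_neg (hq0 : 2 ≤ q 0) (hqrec : ∀ i, q (i + 1) = q i ^ M i)
    (hM : ∀ i, 0 < M i) {i : ℕ} {x : ℝ} (hx : x ≤ M i - 1) :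
    2 / (q (i + 1) : ℝ) ≤ (q i : ℝ) ^ (-x) := by
  have ha : (2 : ℝ) ≤ q i := by exact_mod_cast two_le_of_pow_succ hq0 hqrec hM i
  calc 2 / (q (i + 1) : ℝ) ≤ q i / (q i : ℝ) ^ M i := by rw [hqrec]; push_cast; gcongr
    _ = (q i : ℝ) ^ (-((M i : ℝ) - 1)) := by
        rw [neg_sub, Real.rpow_sub (by linarith), Real.rpow_one, Real.rpow_natCast]
    _ ≤ (q i : ℝ) ^ (-x) := Real.rpow_le_rpow_of_exponent_le (by linarith) (by linarith)

end PowerTower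

lemma exists_ge_forall_lt_le_of_tendsto_zero {u r : ℕ → ℝ} (hu : Tendsto u atTop (𝓝 0))
    (hr : ∀ i, 0 < r i) (N : ℕ) : ∃ n ≥ N, ∀ i < N, u n ≤ r i :=
  ((eventually_ge_atTop N).and ((finite_Iio N).eventually_all.2
    fun i _ => hu.eventually_le_const (hr i))).exists

theorem falconer_uncountable_general
    (M : ℕ → ℕ) (hMpos : ∀ i, 0 < M i)
    (hMtop : Tendsto M atTop atTop)
    (q : ℕ → ℕ) (hq0 : q 0 = 2) (hqrec : ∀ i, q (i + 1) = q i ^ M i)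
    (φ : ℝ → ℝ)
    (G : ℕ → Set ℝ)
    (hG : ∀ i, G i = {x : ℝ | ∃ k : ℤ, 0 ≤ k ∧ k ≤ (q i : ℤ) ∧ x = (k : ℝ) / (q i : ℝ)})
    (r : ℕ → ℝ) (hr : ∀ i, r i = (q i : ℝ) ^ (-φ ((q i : ℕ) : ℝ)))
    (Ei : ℕ → Set ℝ)
    (hEi : ∀ i, Ei i = {x ∈ Set.Icc (0 : ℝ) 1 | Metric.infDist x (G i) ≤ r i})
    (E : Set ℝ) (hE : E = ⋂ i, Ei i)
    (hyp : ∀ᶠ i in atTop, φ ((q i : ℕ) : ℝ) < (M i : ℝ) - 1) :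
    ¬ E.Countable := by
  have hq2 := two_le_of_pow_succ hq0.ge hqrec hMpos
  have hqpos : ∀ i, (0 : ℝ) < q i := fun i => by exact_mod_cast two_pos.trans_le (hq2 i)
  have hrpos : ∀ i, 0 < r i := fun i => hr i ▸ Real.rpow_pos_of_pos (hqpos i) _
  have hanti : Antitone fun i => 2 / (q i : ℝ) := fun i j hij =>
    div_le_div_of_nonneg_left zero_le_two (hqpos i)
      (by exact_mod_cast monotone_of_pow_succ hqrec hMpos hij)
  obtain ⟨N, hN⟩ := eventually_atTop.1
    (hyp.and (eventually_three_mul_le_of_pow_succ hq0.ge hqrec hMpos hMtop))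
  obtain ⟨n, hnN, hn⟩ := exists_ge_forall_lt_le_of_tendsto_zero
    ((tendsto_natCast_atTop_atTop.comp
      (tendsto_atTop_of_pow_succ hq0.ge hqrec hMpos hMtop)).const_div_atTop 2) hrpos N
  -- `n + (i + 1 - n) = max n (i + 1)` indexes the first denominator of `x_S` beyond level `i`
  have hgap : ∀ i, 2 / (q (n + (i + 1 - n)) : ℝ) ≤ r i := fun i => by
    rcases lt_or_ge i N with hi | hi
    · exact (hanti (Nat.le_add_right _ _)).trans (hn i hi)
    · exact (hanti (by omega)).trans
        (hr i ▸ two_div_succ_le_rpow_neg hq0.ge hqrec hMpos (hN i hi).1.le)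
  set Q : ℕ → ℕ := fun m => q (n + m)
  have hQ : ∀ m, 2 ≤ Q m := fun m => hq2 (n + m)
  have hQ3 : ∀ m, 3 * Q m ≤ Q (m + 1) := fun m => (hN (n + m) (by omega)).2
  have hQ2 : ∀ m, 2 * Q m ≤ Q (m + 1) := fun m => by linarith [hQ3 m]
  have hmem : ∀ S, subsetSum (fun m => (Q m : ℝ)⁻¹) S ∈ E := fun S => by
    rw [hE, mem_iInter]
    intro i
    rw [hEi, hG]
    refine ⟨⟨subsetSum_nonneg (fun _ => by positivity) S, subsetSum_inv_le_one hQ hQ2 S⟩, ?_⟩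
    refine le_trans ?_ (hgap i)
    refine infDist_subsetSum_grid_le hQ hQ2 (two_pos.trans_le (hq2 i)) (fun m hm => ?_) S
    exact dvd_of_le_of_pow_succ hqrec hMpos (by omega)
  intro hEc
  exact not_countable_set_nat <| countable_univ_iff.1 <| MapsTo.countable_of_injOn
    (fun S _ => hmem S) (subsetSum_inv_injective (fun m => two_pos.trans_le (hQ m)) hQ3).injOn hEc

/-- If `φ(q i) < M i - 1` for all sufficiently large `i`, then `E` is uncountable. -/
theorem falconer_uncountable
    (M : ℕ → ℕ) (hMpos : ∀ i, 0 < M i) (hMmono : Monotone M)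
    (hMtop : Tendsto M atTop atTop)
    (q : ℕ → ℕ) (hq0 : q 0 = 2) (hqrec : ∀ i, q (i + 1) = q i ^ M i)
    (φ : ℝ → ℝ) (hφpos : ∀ t : ℝ, 2 ≤ t → 0 < φ t)
    (hφmono : MonotoneOn φ (Set.Ici (2 : ℝ)))
    (hφtop : Tendsto φ atTop atTop)
    (G : ℕ → Set ℝ)
    (hG : ∀ i, G i = {x : ℝ | ∃ k : ℤ, 0 ≤ k ∧ k ≤ (q i : ℤ) ∧ x = (k : ℝ) / (q i : ℝ)})
    (r : ℕ → ℝ) (hr : ∀ i, r i = (q i : ℝ) ^ (-φ ((q i : ℕ) : ℝ)))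
    (Ei : ℕ → Set ℝ)
    (hEi : ∀ i, Ei i = {x ∈ Set.Icc (0 : ℝ) 1 | Metric.infDist x (G i) ≤ r i})
    (E : Set ℝ) (hE : E = ⋂ i, Ei i)
    (hyp : ∀ᶠ i in atTop, φ ((q i : ℕ) : ℝ) < (M i : ℝ) - 1) :
    ¬ E.Countable :=
  falconer_uncountable_general M hMpos hMtop q hq0 hqrec φ G hG r hr Ei hEi E hE hyp
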